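/- Assume ‖A‖₂ < 1. Then ε_n → 0 as n → ∞, and there exists a strictly increasing sequence of indices n₁ < n₂ < … such that for every l, ε_{n_l} = ( ‖x^{n_l} − x^{n_l − 1}‖₂ + α^{n_l} )^{1/2} < ε_{n_l − 1}. Moreover, this subsequence admits a further subsequence {n_{l_r}} such that {x^{n_{l_r}}} converges in ℝ^N. -/

import Mathlib

/-!
The smoothed objective `F_ε(x) = ‖Ax - b‖² + 2 ∑ₖ λₖ (xₖ² + ε²)^{qₖ/2}` is a Lyapunov function of
the iteration. Majorizing the penalty by its tangent at `xⁿ` (concavity of `t ↦ t^{q/2}`) and adding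
`‖x - xⁿ‖² - ‖A(x - xⁿ)‖² ≥ 0` gives a surrogate that `xⁿ⁺¹` minimizes coordinatewise, whence
`F_{εₙ₊₁}(xⁿ⁺¹) + (1 - ‖A‖²) ‖xⁿ⁺¹ - xⁿ‖² ≤ F_{εₙ}(xⁿ)`. So the steps are square summable, which
forces `εₙ → 0`. A positive sequence tending to `0` strictly decreases infinitely often, and at such
an index the minimum defining `εₙ` is its second argument. Finally `F_{εₙ}(xⁿ) ≤ F_{ε₀}(x⁰)` bounds
the iterates, so Bolzano–Weierstrass gives the convergent subsequence.
-/

open Finset Filter Matrix Topology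

noncomputable def Ffun {M N : ℕ} (A : Matrix (Fin M) (Fin N) ℝ) (b : Fin M → ℝ)
    (lam q : Fin N → ℝ) (x : Fin N → ℝ) : ℝ :=
  (∑ i, (A.mulVec x i - b i) ^ 2) + 2 * ∑ k, lam k * |x k| ^ (q k)

noncomputable def Gfun {M N : ℕ} (A : Matrix (Fin M) (Fin N) ℝ) (b : Fin M → ℝ)
    (lam q : Fin N → ℝ) (x a w : Fin N → ℝ) (ε : ℝ) : ℝ :=
  (∑ i, (A.mulVec x i - b i) ^ 2) - (∑ i, (A.mulVec (x - a) i) ^ 2)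
    + (∑ k, (x k - a k) ^ 2)
    + ∑ k ∈ Finset.univ.filter (fun k => 1 ≤ q k ∧ q k < 2),
        lam k * (q k * w k * ((x k) ^ 2 + ε ^ 2)
          + (2 - q k) * (w k) ^ (q k / (q k - 2)))
    + ∑ k ∈ Finset.univ.filter (fun k => q k = 2),
        2 * lam k * ((x k) ^ 2 + ε ^ 2) * ((w k) ^ 2 - 2 * w k + 2)

noncomputable def l2 {N : ℕ} (v : Fin N → ℝ) : ℝ :=
  Real.sqrt (∑ k, (v k) ^ 2)

noncomputable def specNorm {M N : ℕ} (A : Matrix (Fin M) (Fin N) ℝ) : ℝ :=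
  ‖LinearMap.toContinuousLinearMap (Matrix.toEuclideanLin A)‖

theorem sum_sq_mulVec_le_specNorm_sq {M N : ℕ} (A : Matrix (Fin M) (Fin N) ℝ) (v : Fin N → ℝ) :
    ∑ i, (A *ᵥ v) i ^ 2 ≤ specNorm A ^ 2 * ∑ k, v k ^ 2 := by
  have h := (LinearMap.toContinuousLinearMap (Matrix.toEuclideanLin A)).le_opNorm
    (WithLp.toLp 2 v)
  rw [LinearMap.coe_toContinuousLinearMap', Matrix.toLpLin_toLp,
    EuclideanSpace.norm_eq, EuclideanSpace.norm_eq] at h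
  simp only [Real.norm_eq_abs, sq_abs] at h
  have h' := pow_le_pow_left₀ (Real.sqrt_nonneg _) h 2
  rwa [mul_pow, Real.sq_sqrt (by positivity), Real.sq_sqrt (by positivity)] at h'

theorem sum_sq_mulVec_sub_sub_sum_sq_mulVec_sub {M N : ℕ} (A : Matrix (Fin M) (Fin N) ℝ)
    (b : Fin M → ℝ) (a z : Fin N → ℝ) :
    ∑ i, (A *ᵥ z - b) i ^ 2 - ∑ i, (A *ᵥ (z - a)) i ^ 2
      = ∑ i, (A *ᵥ a - b) i ^ 2 + 2 * ∑ k, (z k - a k) * (Aᵀ *ᵥ (A *ᵥ a - b)) k := by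
  have hdot : ∑ k, (z k - a k) * (Aᵀ *ᵥ (A *ᵥ a - b)) k
      = ∑ i, (A *ᵥ a - b) i * (A *ᵥ (z - a)) i := by
    change (z - a) ⬝ᵥ _ = (A *ᵥ a - b) ⬝ᵥ _
    rw [mulVec_transpose, dotProduct_mulVec, dotProduct_comm]
  have hsplit : A *ᵥ z - b = (A *ᵥ a - b) + A *ᵥ (z - a) := by
    rw [mulVec_sub]; abel
  rw [hdot, hsplit, Finset.mul_sum, ← Finset.sum_add_distrib, ← Finset.sum_sub_distrib]
  refine Finset.sum_congr rfl fun i _ => ?_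
  simp only [Pi.add_apply]
  ring

theorem surrogate_coord_le {a g c z : ℝ} (hc : 0 ≤ c) (hz : z = (1 + c)⁻¹ * (a - g)) :
    2 * (z - a) * g + (z - a) ^ 2 + c * z ^ 2 ≤ c * a ^ 2 := by
  have hg : g = a - (1 + c) * z := by
    rw [hz, ← mul_assoc, mul_inv_cancel₀ (by positivity), one_mul]; ring
  subst hg
  nlinarith [mul_nonneg (by positivity : (0 : ℝ) ≤ 1 + c) (sq_nonneg (z - a))]

theorem rpow_le_rpow_add_mul_sub {p s t : ℝ} (hp0 : 0 ≤ p) (hp1 : p ≤ 1) (hs : 0 < s)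
    (ht : 0 ≤ t) : t ^ p ≤ s ^ p + p * s ^ (p - 1) * (t - s) := by
  have hb := rpow_one_add_le_one_add_mul_self (s := t / s - 1) (by
    have : 0 ≤ t / s := div_nonneg ht hs.le
    linarith) hp0 hp1
  rw [add_sub_cancel, Real.div_rpow ht hs.le, div_le_iff₀ (by positivity)] at hb
  calc t ^ p ≤ (1 + p * (t / s - 1)) * s ^ p := hb
    _ = s ^ p + p * (s ^ p / s) * (t - s) := by field_simp
    _ = s ^ p + p * s ^ (p - 1) * (t - s) := by rw [Real.rpow_sub_one hs.ne']

theorem abs_le_max_one_rpow {x e q : ℝ} (he : 0 ≤ e) (hq : 1 ≤ q) :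
    |x| ≤ max 1 ((x ^ 2 + e) ^ (q / 2)) := by
  rcases lt_or_ge (x ^ 2 + e) 1 with h | h
  · refine le_max_of_le_left (abs_le_one_iff_mul_self_le_one.2 ?_)
    nlinarith
  · refine le_max_of_le_right ?_
    calc |x| = (x ^ 2) ^ (1 / 2 : ℝ) := by rw [← Real.sqrt_eq_rpow, Real.sqrt_sq_eq_abs]
      _ ≤ (x ^ 2 + e) ^ (1 / 2 : ℝ) := by gcongr; linarith
      _ ≤ (x ^ 2 + e) ^ (q / 2) := Real.rpow_le_rpow_of_exponent_le h (by linarith)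

theorem frequently_lt_of_tendsto_zero {u : ℕ → ℝ} (hpos : ∀ n, 0 < u n)
    (hu : Tendsto u atTop (𝓝 0)) : ∃ᶠ n in atTop, u (n + 1) < u n := by
  rw [frequently_atTop]
  intro N
  by_contra! h
  have hge : ∀ n ≥ N, u N ≤ u n :=
    fun n hn => Nat.le_induction le_rfl (fun m hm ih => ih.trans (h m hm)) n hn
  linarith [hpos N, ge_of_tendsto hu (eventually_atTop.2 ⟨N, hge⟩)]

theorem summable_of_add_le {Φ D : ℕ → ℝ} (hΦ : ∀ n, 0 ≤ Φ n) (hD : ∀ n, 0 ≤ D n)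
    (h : ∀ n, Φ (n + 1) + D n ≤ Φ n) : Summable D := by
  refine summable_of_sum_range_le hD (c := Φ 0) fun m => ?_
  have : ∑ n ∈ range m, D n + Φ m ≤ Φ 0 := by
    induction m with
    | zero => simp
    | succ m ih => rw [sum_range_succ]; linarith [h m]
  linarith [hΦ m]

-- `z` minimizes `‖Az - b‖² - ‖A(z - a)‖² + ‖z - a‖² + ∑ₖ cₖ zₖ²` coordinatewise;
-- the right-hand side is its value at `a`.
theorem weighted_landweber_step_le {M N : ℕ} (A : Matrix (Fin M) (Fin N) ℝ) (b : Fin M → ℝ)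
    {a c z : Fin N → ℝ} (hc : ∀ k, 0 ≤ c k)
    (hz : ∀ k, z k = (1 + c k)⁻¹ * (a k + (Aᵀ *ᵥ b) k - (Aᵀ *ᵥ (A *ᵥ a)) k)) :
    ∑ i, (A *ᵥ z - b) i ^ 2 + (1 - specNorm A ^ 2) * ∑ k, (z k - a k) ^ 2
        + ∑ k, c k * z k ^ 2
      ≤ ∑ i, (A *ᵥ a - b) i ^ 2 + ∑ k, c k * a k ^ 2 := by
  set g := Aᵀ *ᵥ (A *ᵥ a - b)
  have hg : g = Aᵀ *ᵥ (A *ᵥ a) - Aᵀ *ᵥ b := mulVec_sub _ _ _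
  have hcoord : ∀ k, 2 * (z k - a k) * g k + (z k - a k) ^ 2 + c k * z k ^ 2 ≤ c k * a k ^ 2 :=
    fun k => surrogate_coord_le (hc k) (by
      rw [hz k, hg, Pi.sub_apply]; ring)
  have hsum := Finset.sum_le_sum fun k (_ : k ∈ univ) => hcoord k
  simp only [Finset.sum_add_distrib, mul_assoc, ← Finset.mul_sum] at hsum
  have hid := sum_sq_mulVec_sub_sub_sum_sq_mulVec_sub A b a z
  have hspec := sum_sq_mulVec_le_specNorm_sq A (z - a)
  simp only [Pi.sub_apply] at hspec
  linarith

theorem penalty_tangent_le {lam q a z ε : ℝ} (hlam : 0 ≤ lam) (hq0 : 0 ≤ q) (hq2 : q ≤ 2)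
    (hε : ε ≠ 0) :
    2 * lam * (z ^ 2 + ε ^ 2) ^ (q / 2) - lam * q * (a ^ 2 + ε ^ 2) ^ ((q - 2) / 2) * z ^ 2
      ≤ 2 * lam * (a ^ 2 + ε ^ 2) ^ (q / 2)
        - lam * q * (a ^ 2 + ε ^ 2) ^ ((q - 2) / 2) * a ^ 2 := by
  have htan := rpow_le_rpow_add_mul_sub (p := q / 2) (s := a ^ 2 + ε ^ 2) (t := z ^ 2 + ε ^ 2)
    (by positivity) (by linarith) (by positivity) (by positivity)
  rw [show q / 2 - 1 = (q - 2) / 2 by ring] at htan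
  nlinarith [mul_le_mul_of_nonneg_left htan (by positivity : (0 : ℝ) ≤ 2 * lam)]

-- `Ffun` with `|xₖ|^{qₖ}` smoothed to `(xₖ² + ε²)^{qₖ/2}`.
noncomputable def smoothedObjective {M N : ℕ} (A : Matrix (Fin M) (Fin N) ℝ) (b : Fin M → ℝ)
    (lam q : Fin N → ℝ) (x : Fin N → ℝ) (ε : ℝ) : ℝ :=
  ∑ i, (A *ᵥ x - b) i ^ 2 + ∑ k, 2 * lam k * (x k ^ 2 + ε ^ 2) ^ (q k / 2)

section SmoothedObjective

variable {M N : ℕ} (A : Matrix (Fin M) (Fin N) ℝ) (b : Fin M → ℝ) {lam q : Fin N → ℝ}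

theorem smoothedObjective_nonneg (hlam : ∀ k, 0 ≤ lam k) (x : Fin N → ℝ) (ε : ℝ) :
    0 ≤ smoothedObjective A b lam q x ε :=
  add_nonneg (sum_nonneg fun _ _ => sq_nonneg _)
    (sum_nonneg fun k _ => mul_nonneg (mul_nonneg zero_le_two (hlam k)) (by positivity))

theorem smoothedObjective_anti_eps (hlam : ∀ k, 0 ≤ lam k) (hq : ∀ k, 0 ≤ q k) (x : Fin N → ℝ)
    {ε ε' : ℝ} (hε'0 : 0 ≤ ε') (hε' : ε' ≤ ε) :
    smoothedObjective A b lam q x ε' ≤ smoothedObjective A b lam q x ε := by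
  unfold smoothedObjective
  gcongr with k
  · linarith [hlam k]
  · linarith [hq k]

theorem smoothedObjective_step_le (hlam : ∀ k, 0 ≤ lam k) (hq : ∀ k, 0 ≤ q k ∧ q k ≤ 2)
    {a w z : Fin N → ℝ} {ε ε' : ℝ} (hε : 0 < ε) (hε'0 : 0 ≤ ε') (hε' : ε' ≤ ε)
    (hw : ∀ k, w k = (a k ^ 2 + ε ^ 2) ^ ((q k - 2) / 2))
    (hz : ∀ k, z k = (1 + lam k * q k * w k)⁻¹
      * (a k + (Aᵀ *ᵥ b) k - (Aᵀ *ᵥ (A *ᵥ a)) k)) :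
    smoothedObjective A b lam q z ε' + (1 - specNorm A ^ 2) * ∑ k, (z k - a k) ^ 2
      ≤ smoothedObjective A b lam q a ε := by
  have hresidual := weighted_landweber_step_le A b (c := fun k => lam k * q k * w k)
    (fun k => by rw [hw k]; exact mul_nonneg (mul_nonneg (hlam k) (hq k).1) (by positivity)) hz
  have hpenalty := Finset.sum_le_sum fun k (_ : k ∈ univ) =>
    penalty_tangent_le (a := a k) (z := z k) (hlam k) (hq k).1 (hq k).2 hε.ne'
  simp only [← hw, Finset.sum_sub_distrib] at hpenalty
  have hmono := smoothedObjective_anti_eps A b hlam (fun k => (hq k).1) z hε'0 hε'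
  unfold smoothedObjective at hmono ⊢
  linarith

theorem isBounded_range_of_smoothedObjective_le (hlam : ∀ k, 0 < lam k) (hq : ∀ k, 1 ≤ q k)
    {x : ℕ → Fin N → ℝ} {ε : ℕ → ℝ} {C : ℝ}
    (hC : ∀ n, smoothedObjective A b lam q (x n) (ε n) ≤ C) :
    Bornology.IsBounded (Set.range x) := by
  refine (Bornology.IsBounded.pi fun k =>
    Metric.isBounded_closedBall (x := 0) (r := max 1 (C / (2 * lam k)))).subset ?_
  rintro _ ⟨n, rfl⟩ k -
  rw [mem_closedBall_zero_iff, Real.norm_eq_abs]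
  refine (abs_le_max_one_rpow (sq_nonneg (ε n)) (hq k)).trans (max_le_max le_rfl ?_)
  rw [le_div_iff₀ (by linarith [hlam k]), mul_comm]
  have hterm : ∀ j, 0 ≤ 2 * lam j * (x n j ^ 2 + ε n ^ 2) ^ (q j / 2) :=
    fun j => mul_nonneg (mul_nonneg zero_le_two (hlam j).le) (by positivity)
  calc 2 * lam k * (x n k ^ 2 + ε n ^ 2) ^ (q k / 2)
      ≤ ∑ j, 2 * lam j * (x n j ^ 2 + ε n ^ 2) ^ (q j / 2) :=
        single_le_sum (fun j _ => hterm j) (mem_univ k)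
    _ ≤ smoothedObjective A b lam q (x n) (ε n) :=
        le_add_of_nonneg_left (sum_nonneg fun _ _ => sq_nonneg _)
    _ ≤ C := hC n

end SmoothedObjective

section SmoothingRule

variable {ε d : ℕ → ℝ} {α : ℝ}

theorem pos_of_eq_min_sqrt (hε : ∀ n, ε (n + 1) = min (ε n) (√(d n + α ^ (n + 1))))
    (hε0 : 0 < ε 0) (hα : 0 < α) (hd : ∀ n, 0 ≤ d n) (n : ℕ) : 0 < ε n := by
  induction n with
  | zero => exact hε0
  | succ n ih =>
    rw [hε n]
    exact lt_min ih (Real.sqrt_pos.2 (add_pos_of_nonneg_of_pos (hd n) (pow_pos hα _)))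

theorem tendsto_zero_of_eq_min_sqrt (hε : ∀ n, ε (n + 1) = min (ε n) (√(d n + α ^ (n + 1))))
    (hpos : ∀ n, 0 ≤ ε n) (hα0 : 0 ≤ α) (hα1 : α < 1) (hd : Tendsto d atTop (𝓝 0)) :
    Tendsto ε atTop (𝓝 0) := by
  have hbound := (hd.add ((tendsto_pow_atTop_nhds_zero_of_lt_one hα0 hα1).comp
    (tendsto_add_atTop_nat 1))).sqrt
  simp only [add_zero, Real.sqrt_zero] at hbound
  rw [← tendsto_add_atTop_iff_nat 1]
  exact squeeze_zero (fun n => hpos _) (fun n => (hε n).trans_le (min_le_right _ _)) hbound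

theorem eq_sqrt_of_succ_lt (hε : ∀ n, ε (n + 1) = min (ε n) (√(d n + α ^ (n + 1))))
    {n : ℕ} (hlt : ε (n + 1) < ε n) : ε (n + 1) = √(d n + α ^ (n + 1)) := by
  rw [hε] at hlt ⊢
  exact min_eq_right ((min_lt_iff.1 hlt).resolve_left (lt_irrefl _)).le

end SmoothingRule

/-- if `‖A‖₂ < 1`, then `εₙ → 0`, and there is a strictly
increasing sequence of indices `n₁ < n₂ < ⋯` (all `≥ 1`) along which
`ε_{n_l} = (‖x^{n_l} - x^{n_l - 1}‖₂ + α^{n_l})^{1/2} < ε_{n_l - 1}`; moreover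
some further subsequence of `{x^{n_l}}` converges. -/
theorem stmt_11 {M N : ℕ} (A : Matrix (Fin M) (Fin N) ℝ) (hA : specNorm A < 1)
    (b : Fin M → ℝ) (lam q : Fin N → ℝ)
    (hlam : ∀ k, 0 < lam k) (hq : ∀ k, 1 ≤ q k ∧ q k ≤ 2)
    (x : ℕ → Fin N → ℝ) (eps : ℕ → ℝ) (w : ℕ → Fin N → ℝ)
    (α : ℝ) (hα0 : 0 < α) (hα1 : α < 1) (heps0 : 0 < eps 0)
    (hw : ∀ n k, w n k = ((x n k) ^ 2 + (eps n) ^ 2) ^ ((q k - 2) / 2))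
    (hxiter : ∀ n k, x (n + 1) k =
      (1 + lam k * q k * w n k)⁻¹
        * (x n k + Aᵀ.mulVec b k - Aᵀ.mulVec (A.mulVec (x n)) k))
    (hepsiter : ∀ n, eps (n + 1) =
      min (eps n) (Real.sqrt (l2 (x (n + 1) - x n) + α ^ (n + 1)))) :
    Tendsto eps atTop (nhds 0) ∧
    ∃ nl : ℕ → ℕ, StrictMono nl ∧ (∀ l, 1 ≤ nl l) ∧
      (∀ l, eps (nl l) = Real.sqrt (l2 (x (nl l) - x (nl l - 1)) + α ^ (nl l)) ∧
        eps (nl l) < eps (nl l - 1)) ∧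
      ∃ (r : ℕ → ℕ) (xbar : Fin N → ℝ), StrictMono r ∧
        Tendsto (fun j => x (nl (r j))) atTop (nhds xbar) := by
  have hγ : 0 < 1 - specNorm A ^ 2 := by
    have : 0 ≤ specNorm A := norm_nonneg _
    nlinarith
  have heps_pos := pos_of_eq_min_sqrt hepsiter heps0 hα0 fun n => Real.sqrt_nonneg _
  set Φ := fun n => smoothedObjective A b lam q (x n) (eps n)
  set D := fun n => ∑ k, (x (n + 1) k - x n k) ^ 2
  have hD_nonneg : ∀ n, 0 ≤ (1 - specNorm A ^ 2) * D n := fun n =>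
    mul_nonneg hγ.le (sum_nonneg fun _ _ => sq_nonneg _)
  have hdescent : ∀ n, Φ (n + 1) + (1 - specNorm A ^ 2) * D n ≤ Φ n := fun n =>
    smoothedObjective_step_le A b (fun k => (hlam k).le) (fun k => ⟨by linarith [hq k], (hq k).2⟩)
      (heps_pos n) (heps_pos (n + 1)).le ((hepsiter n).trans_le (min_le_left _ _)) (hw n)
      (hxiter n)
  have hD : Summable D := (summable_mul_left_iff hγ.ne').1 <|
    summable_of_add_le (fun n => smoothedObjective_nonneg A b (fun k => (hlam k).le) _ _)
      hD_nonneg hdescent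
  have heps_lim : Tendsto eps atTop (𝓝 0) :=
    tendsto_zero_of_eq_min_sqrt hepsiter (fun n => (heps_pos n).le) hα0.le hα1 <| by
      have h := hD.tendsto_atTop_zero.sqrt
      rw [Real.sqrt_zero] at h
      exact h
  obtain ⟨φ, hφ_mono, hφ_lt⟩ :=
    extraction_of_frequently_atTop (frequently_lt_of_tendsto_zero heps_pos heps_lim)
  have hΦ_le : ∀ n, Φ n ≤ Φ 0 := fun n =>
    antitone_nat_of_succ_le (fun n => (le_add_of_nonneg_right (hD_nonneg n)).trans (hdescent n))
      (Nat.zero_le n)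
  obtain ⟨xbar, -, r, hr, hconv⟩ := tendsto_subseq_of_bounded
    (isBounded_range_of_smoothedObjective_le A b hlam (fun k => (hq k).1) hΦ_le)
    fun l => Set.mem_range_self (φ l + 1)
  exact ⟨heps_lim, fun l => φ l + 1, hφ_mono.add_const 1, fun l => Nat.le_add_left 1 _,
    fun l => ⟨eq_sqrt_of_succ_lt hepsiter (hφ_lt l), hφ_lt l⟩, r, xbar, hr, hconv⟩
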